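/- Let $\mu \geq 1$ and $f : (0,1] \to [0,\infty)$ a measurable function. Suppose $\alpha, \beta \in [0,1)$ and there exist constants $a_1, a_2 > 0$ such that $f(t) \leq a_1 t^{-\alpha} + a_2 \int_0^t (t-s)^{-\beta} f(s)\, ds$ for all $t \in (0,1]$ and $f$ is integrable on $(0,1]$. Then there exists $C = C(\alpha, \beta, a_2) > 0$ such that $f(t) \leq C a_1 t^{-\alpha}$ for all $t \in (0,1]$. -/

import Mathlib

/-!
Work with the `ℝ≥0∞`-valued Abel integral `I_p g (t) = ∫₀ᵗ (t - s)^p g(s) ds`, for which Tonelli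
gives the semigroup law `I_p (I_q g) = B(q + 1, p + 1) I_{p+q+1} g` with no integrability
bookkeeping. Substituting the inequality into itself `n` times bounds `f t` by `a₁ t^{-α}` times a
partial sum of `∑ cₙ` plus the remainder `cₙ I_{γₙ} f (t)`, where `γₙ = n (1 - β) - β → ∞`. The
ratios `cₙ₊₁ / cₙ = a₂ B(1 - β, γₙ + 1)` tend to `0` by dominated convergence, so the series
converges, and once `γₙ ≥ 0` the remainder is at most `cₙ ‖f‖_{L¹} → 0`.
-/

open MeasureTheory Set Filter Topology ENNReal

/-- With this normalization `betaInt p q` is the Euler Beta function `B(q + 1, p + 1)`. -/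
noncomputable def betaInt (p q : ℝ) : ℝ := ∫ u in Ioo 0 1, (1 - u) ^ p * u ^ q

lemma integrableOn_betaInt {p q : ℝ} (hp : -1 < p) (hq : -1 < q) :
    IntegrableOn (fun u : ℝ => (1 - u) ^ p * u ^ q) (Ioo 0 1) := by
  have h := (Complex.betaIntegral_convergent (u := q + 1) (v := p + 1)
    (by simp; linarith) (by simp; linarith)).norm
  rw [intervalIntegrable_iff_integrableOn_Ioo_of_le zero_le_one] at h
  refine h.congr_fun (fun u hu => ?_) measurableSet_Ioo
  have h1 : (1 - (u : ℂ)) = ((1 - u : ℝ) : ℂ) := by push_cast; rfl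
  simp only [add_sub_cancel_right, norm_mul, h1, Complex.norm_cpow_eq_rpow_re_of_pos hu.1,
    Complex.norm_cpow_eq_rpow_re_of_pos (sub_pos.2 hu.2), Complex.ofReal_re, mul_comm]

lemma betaInt_nonneg (p q : ℝ) : 0 ≤ betaInt p q :=
  setIntegral_nonneg measurableSet_Ioo fun _ hu =>
    mul_nonneg (Real.rpow_nonneg (sub_pos.2 hu.2).le _) (Real.rpow_nonneg hu.1.le _)

lemma betaInt_anti_left {p p' q : ℝ} (hp : -1 < p) (hpp' : p ≤ p') (hq : -1 < q) :
    betaInt p' q ≤ betaInt p q :=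
  setIntegral_mono_on (integrableOn_betaInt (hp.trans_le hpp') hq) (integrableOn_betaInt hp hq)
    measurableSet_Ioo fun u hu => mul_le_mul_of_nonneg_right
      (Real.rpow_le_rpow_of_exponent_ge (sub_pos.2 hu.2) (by linarith [hu.1]) hpp')
      (Real.rpow_nonneg hu.1.le _)

lemma tendsto_betaInt_atTop {q : ℝ} (hq : -1 < q) :
    Tendsto (fun p => betaInt p q) atTop (𝓝 0) := by
  have hlim := tendsto_integral_filter_of_dominated_convergence (μ := volume.restrict (Ioo 0 1))
    (F := fun (p u : ℝ) => (1 - u) ^ p * u ^ q) (f := 0) (fun u => u ^ q)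
    (Eventually.of_forall fun p => by fun_prop)
    ((eventually_ge_atTop 0).mono fun p hp => ae_restrict_of_forall_mem measurableSet_Ioo
      fun u hu => by
        rw [Real.norm_of_nonneg (mul_nonneg (Real.rpow_nonneg (sub_pos.2 hu.2).le _)
          (Real.rpow_nonneg hu.1.le _))]
        exact mul_le_of_le_one_left (Real.rpow_nonneg hu.1.le _)
          (Real.rpow_le_one (sub_pos.2 hu.2).le (by linarith [hu.1]) hp))
    (by simpa [IntegrableOn] using integrableOn_betaInt (p := 0) (by norm_num) hq)
    (ae_restrict_of_forall_mem measurableSet_Ioo fun u hu => by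
      simpa using (tendsto_rpow_atTop_of_base_lt_one (1 - u) (by linarith [hu.2])
        (by linarith [hu.1])).mul_const (u ^ q))
  simpa [betaInt] using hlim

lemma setLIntegral_rpow_mul_rpow {p q r t : ℝ} (hp : -1 < p) (hq : -1 < q) (hrt : r < t) :
    ∫⁻ s in Ioo r t, ENNReal.ofReal ((t - s) ^ p) * ENNReal.ofReal ((s - r) ^ q) =
      ENNReal.ofReal ((t - r) ^ (p + q + 1)) * ENNReal.ofReal (betaInt p q) := by
  have hc : 0 < t - r := sub_pos.2 hrt
  have himage : (fun u => (t - r) * u + r) '' Ioo 0 1 = Ioo r t := by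
    rw [image_affine_Ioo hc]; simp
  rw [← himage, lintegral_image_eq_lintegral_abs_deriv_mul measurableSet_Ioo
      (fun u _ => (((hasDerivAt_id' u).const_mul (t - r)).add_const r).hasDerivWithinAt)
      (fun x _ y _ h => by simpa [hc.ne'] using h),
    betaInt, ofReal_integral_eq_lintegral_ofReal (integrableOn_betaInt hp hq)
      (ae_restrict_of_forall_mem measurableSet_Ioo fun u hu =>
        mul_nonneg (Real.rpow_nonneg (sub_pos.2 hu.2).le _) (Real.rpow_nonneg hu.1.le _)),
    ← lintegral_const_mul' _ _ ofReal_ne_top]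
  refine setLIntegral_congr_fun measurableSet_Ioo fun u hu => ?_
  have h1u : 0 ≤ 1 - u := (sub_pos.2 hu.2).le
  rw [show t - ((t - r) * u + r) = (t - r) * (1 - u) by ring,
    show (t - r) * u + r - r = (t - r) * u by ring, Real.mul_rpow hc.le h1u,
    Real.mul_rpow hc.le hu.1.le, Real.rpow_add_one hc.ne', Real.rpow_add hc, mul_one,
    abs_of_pos hc, ← ofReal_mul, ← ofReal_mul, ← ofReal_mul]
  · congr 1; ring
  all_goals positivity

lemma lintegral_Ioo_Ioo_swap {F : ℝ → ℝ → ℝ≥0∞} (hF : Measurable (Function.uncurry F))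
    (a t : ℝ) :
    ∫⁻ s in Ioo a t, ∫⁻ r in Ioo a s, F s r = ∫⁻ r in Ioo a t, ∫⁻ s in Ioo r t, F s r := by
  set G : ℝ × ℝ → ℝ≥0∞ := {z | z.2 < z.1}.indicator (Function.uncurry F)
  have hG : Measurable G := hF.indicator (measurableSet_lt measurable_snd measurable_fst)
  have hleft : ∀ s ∈ Ioo a t, ∫⁻ r in Ioo a s, F s r = ∫⁻ r in Ioo a t, G (s, r) := by
    intro s hs
    have hG_eq : ∀ r, G (s, r) = (Iio s).indicator (F s) r := fun r => by
      simp [G, indicator_apply]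
    simp_rw [hG_eq]
    rw [setLIntegral_indicator measurableSet_Iio, inter_comm, Ioo_inter_Iio,
      min_eq_right hs.2.le]
  have hright : ∀ r ∈ Ioo a t, ∫⁻ s in Ioo a t, G (s, r) = ∫⁻ s in Ioo r t, F s r := by
    intro r hr
    have hG_eq : ∀ s, G (s, r) = (Ioi r).indicator (fun s => F s r) s := fun s => by
      simp [G, indicator_apply]
    simp_rw [hG_eq]
    rw [setLIntegral_indicator measurableSet_Ioi, inter_comm, Ioo_inter_Ioi,
      max_eq_right hr.1.le]
  calc ∫⁻ s in Ioo a t, ∫⁻ r in Ioo a s, F s r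
      = ∫⁻ s in Ioo a t, ∫⁻ r in Ioo a t, G (s, r) :=
        setLIntegral_congr_fun measurableSet_Ioo hleft
    _ = ∫⁻ r in Ioo a t, ∫⁻ s in Ioo a t, G (s, r) := lintegral_lintegral_swap hG.aemeasurable
    _ = ∫⁻ r in Ioo a t, ∫⁻ s in Ioo r t, F s r := setLIntegral_congr_fun measurableSet_Ioo hright

noncomputable def abelIntegral (p : ℝ) (g : ℝ → ℝ≥0∞) (t : ℝ) : ℝ≥0∞ :=
  ∫⁻ s in Ioo 0 t, ENNReal.ofReal ((t - s) ^ p) * g s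

section AbelIntegral

variable {p q t : ℝ} {g h : ℝ → ℝ≥0∞}

lemma abelIntegral_mono (hgh : ∀ s ∈ Ioo 0 t, g s ≤ h s) :
    abelIntegral p g t ≤ abelIntegral p h t :=
  setLIntegral_mono' measurableSet_Ioo fun s hs => mul_le_mul_right (hgh s hs) _

lemma abelIntegral_add (hg : Measurable g) :
    abelIntegral p (fun s => g s + h s) t = abelIntegral p g t + abelIntegral p h t := by
  simp only [abelIntegral, mul_add]
  exact lintegral_add_left (by fun_prop) _

lemma abelIntegral_const_mul {c : ℝ≥0∞} (hc : c ≠ ∞) :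
    abelIntegral p (fun s => c * g s) t = c * abelIntegral p g t := by
  simp only [abelIntegral, mul_left_comm _ c]
  exact lintegral_const_mul' _ _ hc

lemma abelIntegral_rpow (hp : -1 < p) (hq : -1 < q) (ht : 0 < t) :
    abelIntegral p (fun s => ENNReal.ofReal (s ^ q)) t =
      ENNReal.ofReal (t ^ (p + q + 1)) * ENNReal.ofReal (betaInt p q) := by
  simpa [abelIntegral] using setLIntegral_rpow_mul_rpow hp hq ht

lemma abelIntegral_abelIntegral (hg : Measurable g) (hp : -1 < p) (hq : -1 < q) :
    abelIntegral p (abelIntegral q g) t =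
      ENNReal.ofReal (betaInt p q) * abelIntegral (p + q + 1) g t := by
  simp only [abelIntegral, ← lintegral_const_mul' _ _ ofReal_ne_top]
  rw [lintegral_Ioo_Ioo_swap (by fun_prop)]
  refine setLIntegral_congr_fun measurableSet_Ioo fun r hr => ?_
  simp only [← mul_assoc]
  rw [lintegral_mul_const _ (by fun_prop), setLIntegral_rpow_mul_rpow hp hq hr.2]
  ring

lemma abelIntegral_le_setLIntegral (hp : 0 ≤ p) (ht : t ≤ 1) :
    abelIntegral p g t ≤ ∫⁻ s in Ioc 0 1, g s :=
  calc abelIntegral p g t ≤ ∫⁻ s in Ioo 0 t, g s :=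
        setLIntegral_mono' measurableSet_Ioo fun s hs => mul_le_of_le_one_left' <|
          ofReal_le_one.2 (Real.rpow_le_one (sub_pos.2 hs.2).le (by linarith [hs.1]) hp)
    _ ≤ ∫⁻ s in Ioc 0 1, g s := lintegral_mono_set fun s hs => ⟨hs.1, hs.2.le.trans ht⟩

end AbelIntegral

def henryExponent (β : ℝ) (n : ℕ) : ℝ := n * (1 - β) - β

noncomputable def henryCoeff (β a₂ : ℝ) : ℕ → ℝ
  | 0 => a₂
  | n + 1 => henryCoeff β a₂ n * (a₂ * betaInt (henryExponent β n) (-β))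

noncomputable def henryConst (α β a₂ : ℝ) : ℝ := 1 + betaInt (-β) (-α) * ∑' n, henryCoeff β a₂ n

section HenryConstants

variable {α β a₂ : ℝ}

lemma neg_le_henryExponent (hβ : β < 1) (n : ℕ) : -β ≤ henryExponent β n := by
  have : 0 ≤ (n : ℝ) * (1 - β) := mul_nonneg n.cast_nonneg (by linarith)
  unfold henryExponent; linarith

lemma henryExponent_add_one_sub (n : ℕ) :
    henryExponent β n + 1 - β = henryExponent β (n + 1) := by
  simp only [henryExponent]; push_cast; ring

lemma tendsto_henryExponent_atTop (hβ : β < 1) : Tendsto (henryExponent β) atTop atTop :=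
  tendsto_atTop_add_const_right _ _
    (tendsto_natCast_atTop_atTop.atTop_mul_const (by linarith))

lemma henryCoeff_nonneg (ha₂ : 0 ≤ a₂) (n : ℕ) : 0 ≤ henryCoeff β a₂ n := by
  induction n with
  | zero => exact ha₂
  | succ n ih => exact mul_nonneg ih (mul_nonneg ha₂ (betaInt_nonneg _ _))

lemma summable_henryCoeff (hβ : β < 1) (ha₂ : 0 ≤ a₂) : Summable (henryCoeff β a₂) := by
  have hratio : ∀ᶠ n in atTop, a₂ * betaInt (henryExponent β n) (-β) ≤ 1 / 2 := by
    have h := ((tendsto_betaInt_atTop (q := -β) (by linarith)).comp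
      (tendsto_henryExponent_atTop hβ)).const_mul a₂
    rw [mul_zero] at h
    exact h.eventually_le_const (by norm_num)
  refine summable_of_ratio_norm_eventually_le (by norm_num : (1 / 2 : ℝ) < 1) ?_
  filter_upwards [hratio] with n hn
  rw [Real.norm_of_nonneg (henryCoeff_nonneg ha₂ _), Real.norm_of_nonneg (henryCoeff_nonneg ha₂ _),
    henryCoeff, mul_comm (1 / 2 : ℝ)]
  exact mul_le_mul_of_nonneg_left hn (henryCoeff_nonneg ha₂ n)

lemma henryConst_pos (ha₂ : 0 ≤ a₂) : 0 < henryConst α β a₂ := by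
  have : 0 ≤ betaInt (-β) (-α) * ∑' n, henryCoeff β a₂ n :=
    mul_nonneg (betaInt_nonneg _ _) (tsum_nonneg (henryCoeff_nonneg ha₂))
  unfold henryConst; linarith

end HenryConstants

section Gronwall

variable {α β a₁ a₂ : ℝ} {F : ℝ → ℝ≥0∞}

lemma abelIntegral_le_of_henry (hα : α < 1) (hβ : β < 1) (ha₂ : 0 ≤ a₂) (hF : Measurable F)
    (hle : ∀ t ∈ Ioc 0 1, F t ≤ ENNReal.ofReal a₁ * ENNReal.ofReal (t ^ (-α)) +
      ENNReal.ofReal a₂ * abelIntegral (-β) F t)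
    {γ t : ℝ} (hγ : -1 < γ) (ht : t ∈ Ioc 0 1) :
    abelIntegral γ F t ≤
      ENNReal.ofReal a₁ * ENNReal.ofReal (t ^ (-α)) * ENNReal.ofReal (betaInt γ (-α)) +
        ENNReal.ofReal (a₂ * betaInt γ (-β)) * abelIntegral (γ + 1 - β) F t := by
  have htα : t ^ (γ + -α + 1) ≤ t ^ (-α) :=
    Real.rpow_le_rpow_of_exponent_ge ht.1 ht.2 (by linarith)
  calc abelIntegral γ F t
      ≤ abelIntegral γ (fun s => ENNReal.ofReal a₁ * ENNReal.ofReal (s ^ (-α)) +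
          ENNReal.ofReal a₂ * abelIntegral (-β) F s) t :=
        abelIntegral_mono fun s hs => hle s ⟨hs.1, hs.2.le.trans ht.2⟩
    _ = ENNReal.ofReal a₁ * ENNReal.ofReal (t ^ (γ + -α + 1)) * ENNReal.ofReal (betaInt γ (-α))
          + ENNReal.ofReal a₂ * ENNReal.ofReal (betaInt γ (-β)) *
            abelIntegral (γ + -β + 1) F t := by
        rw [abelIntegral_add (by fun_prop), abelIntegral_const_mul ofReal_ne_top,
          abelIntegral_const_mul ofReal_ne_top, abelIntegral_rpow hγ (by linarith) ht.1,
          abelIntegral_abelIntegral hF hγ (by linarith), mul_assoc, mul_assoc]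
    _ ≤ _ := by
        rw [ENNReal.ofReal_mul ha₂, show γ + -β + 1 = γ + 1 - β by ring]
        gcongr

lemma le_henry_iterate (hα : α < 1) (hβ : β < 1) (ha₂ : 0 ≤ a₂) (hF : Measurable F)
    (hle : ∀ t ∈ Ioc 0 1, F t ≤ ENNReal.ofReal a₁ * ENNReal.ofReal (t ^ (-α)) +
      ENNReal.ofReal a₂ * abelIntegral (-β) F t)
    (n : ℕ) {t : ℝ} (ht : t ∈ Ioc 0 1) :
    F t ≤ ENNReal.ofReal a₁ * ENNReal.ofReal (t ^ (-α)) *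
        ENNReal.ofReal (1 + betaInt (-β) (-α) * ∑ k ∈ Finset.range n, henryCoeff β a₂ k) +
      ENNReal.ofReal (henryCoeff β a₂ n) * abelIntegral (henryExponent β n) F t := by
  induction n with
  | zero => simpa [henryExponent, henryCoeff] using hle t ht
  | succ n ih =>
    set A := ENNReal.ofReal a₁ * ENNReal.ofReal (t ^ (-α))
    set M := betaInt (-β) (-α)
    set S := ∑ k ∈ Finset.range n, henryCoeff β a₂ k
    have hγ := neg_le_henryExponent hβ n
    have hC := henryCoeff_nonneg ha₂ (β := β) n
    have hM : 0 ≤ M := betaInt_nonneg _ _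
    have hS : 0 ≤ S := Finset.sum_nonneg fun k _ => henryCoeff_nonneg ha₂ k
    have hstep := abelIntegral_le_of_henry hα hβ ha₂ hF hle (γ := henryExponent β n)
      (by linarith) ht
    rw [henryExponent_add_one_sub] at hstep
    have hB : betaInt (henryExponent β n) (-α) ≤ M :=
      betaInt_anti_left (by linarith) hγ (by linarith)
    calc F t
        ≤ A * ENNReal.ofReal (1 + M * S) + ENNReal.ofReal (henryCoeff β a₂ n) *
            (A * ENNReal.ofReal (betaInt (henryExponent β n) (-α)) +
              ENNReal.ofReal (a₂ * betaInt (henryExponent β n) (-β)) *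
                abelIntegral (henryExponent β (n + 1)) F t) :=
          ih.trans (by gcongr)
      _ = A * (ENNReal.ofReal (1 + M * S) +
              ENNReal.ofReal (henryCoeff β a₂ n * betaInt (henryExponent β n) (-α))) +
            ENNReal.ofReal (henryCoeff β a₂ (n + 1)) *
              abelIntegral (henryExponent β (n + 1)) F t := by
          rw [henryCoeff, ENNReal.ofReal_mul hC, ENNReal.ofReal_mul hC]
          ring
      _ ≤ _ := by
          rw [← ENNReal.ofReal_add (by positivity) (mul_nonneg hC (betaInt_nonneg _ _)),
            Finset.sum_range_succ]
          gcongr A * ENNReal.ofReal ?_ + _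
          nlinarith [mul_le_mul_of_nonneg_left hB hC]

theorem le_henryConst_mul_of_henry (hα : α < 1) (hβ : β < 1) (ha₂ : 0 ≤ a₂) (hF : Measurable F)
    (hFint : ∫⁻ s in Ioc 0 1, F s ≠ ∞)
    (hle : ∀ t ∈ Ioc 0 1, F t ≤ ENNReal.ofReal a₁ * ENNReal.ofReal (t ^ (-α)) +
      ENNReal.ofReal a₂ * abelIntegral (-β) F t)
    {t : ℝ} (ht : t ∈ Ioc 0 1) :
    F t ≤ ENNReal.ofReal a₁ * ENNReal.ofReal (t ^ (-α)) * ENNReal.ofReal (henryConst α β a₂) := by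
  set A := ENNReal.ofReal a₁ * ENNReal.ofReal (t ^ (-α))
  set L := ∫⁻ s in Ioc 0 1, F s
  have hsum := summable_henryCoeff hβ ha₂
  have hbound : ∀ᶠ n in atTop,
      F t ≤ A * ENNReal.ofReal (henryConst α β a₂) + ENNReal.ofReal (henryCoeff β a₂ n) * L := by
    filter_upwards [(tendsto_henryExponent_atTop hβ).eventually_ge_atTop 0] with n hn
    refine (le_henry_iterate hα hβ ha₂ hF hle n ht).trans ?_
    gcongr
    · exact add_le_add_right (mul_le_mul_of_nonneg_left
        (hsum.sum_le_tsum _ fun k _ => henryCoeff_nonneg ha₂ k) (betaInt_nonneg _ _)) 1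
    · exact abelIntegral_le_setLIntegral hn ht.2
  have hlim : Tendsto (fun n => A * ENNReal.ofReal (henryConst α β a₂) +
      ENNReal.ofReal (henryCoeff β a₂ n) * L) atTop
      (𝓝 (A * ENNReal.ofReal (henryConst α β a₂))) := by
    simpa using tendsto_const_nhds.add
      (ENNReal.Tendsto.mul_const (ENNReal.tendsto_ofReal hsum.tendsto_atTop_zero) (Or.inr hFint))
  exact ge_of_tendsto hlim hbound

end Gronwall

lemma enorm_le_add_abelIntegral {f : ℝ → ℝ} {p t x c : ℝ} (hc : 0 ≤ c) (hft : 0 ≤ f t)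
    (hle : f t ≤ x + c * ∫ s in Ioo 0 t, (t - s) ^ p * f s) :
    ‖f t‖ₑ ≤ ENNReal.ofReal x + ENNReal.ofReal c * abelIntegral p (fun s => ‖f s‖ₑ) t :=
  calc ‖f t‖ₑ = ENNReal.ofReal (f t) := Real.enorm_eq_ofReal hft
    _ ≤ ENNReal.ofReal x + ENNReal.ofReal c * ‖∫ s in Ioo 0 t, (t - s) ^ p * f s‖ₑ := by
        grw [ENNReal.ofReal_le_ofReal hle, ENNReal.ofReal_add_le, ENNReal.ofReal_mul hc]
        gcongr
        exact Real.ofReal_le_enorm _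
    _ ≤ ENNReal.ofReal x + ENNReal.ofReal c * abelIntegral p (fun s => ‖f s‖ₑ) t := by
        gcongr
        refine (enorm_integral_le_lintegral_enorm _).trans_eq
          (setLIntegral_congr_fun measurableSet_Ioo fun s hs => ?_)
        rw [enorm_mul, Real.enorm_eq_ofReal (Real.rpow_nonneg (sub_pos.2 hs.2).le _)]

/-- Henry's singular Gronwall inequality: an integrable nonnegative function satisfying an
integral inequality with weakly singular kernel `(t-s)^{-β}` and singular forcing
`a₁ t^{-α}` is bounded by a constant multiple of the forcing, with the constant depending
only on `α`, `β`, `a₂`. -/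
theorem stmt6 (α β a₂ : ℝ) (hα : α ∈ Set.Ico (0 : ℝ) 1) (hβ : β ∈ Set.Ico (0 : ℝ) 1)
    (ha₂ : 0 < a₂) :
    ∃ C > 0, ∀ (f : ℝ → ℝ) (a₁ : ℝ), 0 < a₁ →
      Measurable f →
      (∀ t ∈ Set.Ioc (0 : ℝ) 1, 0 ≤ f t) →
      IntegrableOn f (Set.Ioc 0 1) →
      (∀ t ∈ Set.Ioc (0 : ℝ) 1,
        f t ≤ a₁ * t ^ (-α) + a₂ * ∫ s in Set.Ioo (0 : ℝ) t, (t - s) ^ (-β) * f s) →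
      ∀ t ∈ Set.Ioc (0 : ℝ) 1, f t ≤ C * a₁ * t ^ (-α) := by
  refine ⟨henryConst α β a₂, henryConst_pos ha₂.le,
    fun f a₁ ha₁ hf hf0 hfi hle t ht => ?_⟩
  have hle_enorm : ∀ s ∈ Ioc 0 1, ‖f s‖ₑ ≤ ENNReal.ofReal a₁ * ENNReal.ofReal (s ^ (-α)) +
      ENNReal.ofReal a₂ * abelIntegral (-β) (fun r => ‖f r‖ₑ) s := fun s hs => by
    rw [← ENNReal.ofReal_mul ha₁.le]
    exact enorm_le_add_abelIntegral ha₂.le (hf0 s hs) (hle s hs)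
  have hbound := le_henryConst_mul_of_henry hα.2 hβ.2 ha₂.le hf.enorm hfi.2.ne hle_enorm ht
  have htα : 0 ≤ t ^ (-α) := Real.rpow_nonneg ht.1.le _
  have hC := henryConst_pos ha₂.le (α := α) (β := β)
  rw [Real.enorm_eq_ofReal (hf0 t ht), ← ENNReal.ofReal_mul ha₁.le,
    ← ENNReal.ofReal_mul (by positivity), ENNReal.ofReal_le_ofReal_iff (by positivity)] at hbound
  linarith
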